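/- For g ≥ 1, the group S_g of matrices [[I_g,B],[0,I_g]] with B symmetric is normally generated in urSp(2g) by Y_{1,1} = [[I_g, S_{1,1}],[0,I_g]], where S_{1,1} is the matrix with (1,1)-entry 1 and all other entries 0. That is, S_g is the smallest normal subgroup of urSp(2g) containing Y_{1,1}. -/

import Mathlib

open Matrix

/-- The standard symplectic form matrix `J = [[0, I],[-I, 0]]`. -/
def Jmat (g : ℕ) : Matrix (Fin g ⊕ Fin g) (Fin g ⊕ Fin g) ℤ := fromBlocks 0 1 (-1) 0

/-- `Sp(2g, ℤ)` as a set of integer matrices. -/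
def SpSet (g : ℕ) : Set (Matrix (Fin g ⊕ Fin g) (Fin g ⊕ Fin g) ℤ) :=
  {X | IsUnit X.det ∧ Xᵀ * Jmat g * X = Jmat g}

/-- `urSp(2g)`: symplectic matrices with vanishing lower-left `g × g` block. -/
def urSpSet (g : ℕ) : Set (Matrix (Fin g ⊕ Fin g) (Fin g ⊕ Fin g) ℤ) :=
  {X | X ∈ SpSet g ∧ X.toBlocks₂₁ = 0}

/-- The explicit description: matrices `[[A, B],[0, ᵗA⁻¹]]` with `A` unimodular and
`A⁻¹ * B` symmetric. -/
def urSpSet' (g : ℕ) : Set (Matrix (Fin g ⊕ Fin g) (Fin g ⊕ Fin g) ℤ) :=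
  {X | ∃ A B : Matrix (Fin g) (Fin g) ℤ, IsUnit A.det ∧ (A⁻¹ * B).IsSymm ∧
    X = fromBlocks A B 0 (A⁻¹)ᵀ}

/-- `S_{i,j}`: the symmetric matrix with `1` at `(i,j)` and `(j,i)` and `0` elsewhere
(just a `1` at `(i,i)` when `i = j`). -/
def Smat (g : ℕ) (i j : Fin g) : Matrix (Fin g) (Fin g) ℤ :=
  Matrix.of fun k l => if (k = i ∧ l = j) ∨ (k = j ∧ l = i) then 1 else 0

/-- The elementary matrix `E_{i,j} = I + ℰ_{i,j}`. -/
def Emat (g : ℕ) (i j : Fin g) : Matrix (Fin g) (Fin g) ℤ := 1 + Matrix.single i j 1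

/-- `F_i = I - 2 S_{i,i}`. -/
def Fmat (g : ℕ) (i : Fin g) : Matrix (Fin g) (Fin g) ℤ := 1 - 2 • Matrix.single i i 1

/-- `A_{i,j} = I + S_{i,j} - S_{i,i} - S_{j,j}`, the transposition permutation matrix. -/
def Amat (g : ℕ) (i j : Fin g) : Matrix (Fin g) (Fin g) ℤ :=
  1 + Smat g i j - Smat g i i - Smat g j j

/-- `Y_{i,j} = [[I, S_{i,j}],[0, I]]`. -/
def Ymat (g : ℕ) (i j : Fin g) : Matrix (Fin g ⊕ Fin g) (Fin g ⊕ Fin g) ℤ :=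
  fromBlocks 1 (Smat g i j) 0 1

/-- `X_{i,j} = [[E_{i,j}, 0],[0, ᵗE_{i,j}⁻¹]]` (the paper's `-E_{j,i}` denotes `ᵗE_{i,j}⁻¹`). -/
noncomputable def Xmat (g : ℕ) (i j : Fin g) : Matrix (Fin g ⊕ Fin g) (Fin g ⊕ Fin g) ℤ :=
  fromBlocks (Emat g i j) 0 0 ((Emat g i j)⁻¹)ᵀ

/-- `Z_i = [[F_i, 0],[0, F_i]]`. -/
def Zmat (g : ℕ) (i : Fin g) : Matrix (Fin g ⊕ Fin g) (Fin g ⊕ Fin g) ℤ :=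
  fromBlocks (Fmat g i) 0 0 (Fmat g i)

/-- `S_g = {[[I, B],[0, I]] : B symmetric}`. -/
def SgSet (g : ℕ) : Set (Matrix (Fin g ⊕ Fin g) (Fin g ⊕ Fin g) ℤ) :=
  {X | ∃ B : Matrix (Fin g) (Fin g) ℤ, B.IsSymm ∧ X = fromBlocks 1 B 0 1}

/-- `GL(g, ℤ)` as the set of integer matrices with unit determinant. -/
def GLSet (g : ℕ) : Set (Matrix (Fin g) (Fin g) ℤ) := {X | IsUnit X.det}

/-- The level-`d` principal congruence subgroup `Γ_d(g)` of `GL(g, ℤ)`. -/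
def GammaSet (d g : ℕ) : Set (Matrix (Fin g) (Fin g) ℤ) :=
  {X | IsUnit X.det ∧ X.map (fun a : ℤ => (a : ZMod d)) = 1}

/-- The normal closure of `S` in the group `U` (a subset of invertible matrices),
described as the set of products of `U`-conjugates of elements of `S` and their inverses. -/
def ncl {n : Type*} [Fintype n] [DecidableEq n]
    (U S : Set (Matrix n n ℤ)) : Set (Matrix n n ℤ) :=
  ↑(Submonoid.closure {m | ∃ u ∈ U, ∃ y ∈ S, m = u * y * u⁻¹ ∨ m = u * y⁻¹ * u⁻¹})

/-!
Write `Y(C) = [[I, C], [0, I]]`. An element of `urSp(2g)` has the form `[[A, B], [0, ᵗA⁻¹]]`, and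
conjugation by it sends `Y(C)` to `Y(A C ᵗA)`; hence the normal closure of `Y(S_{1,1})` lies in
`S_g`. Conversely, the matrices `C` with `Y(±C)` in the normal closure form an additive group
containing `A S_{1,1} ᵗA = v ᵗv` for every first column `v` of a unimodular `A`. The columns
`v = e_i` (of a permutation matrix) and `v = e_i + e_j` (of a transvection times a permutation
matrix) give every `S_{i,i}` and `S_{i,i} + S_{j,j} + S_{i,j}`, hence every `S_{i,j}`, and these
span the symmetric integer matrices.
-/

section UpperUnipotent

variable {n α : Type*} [DecidableEq n] [CommRing α]

def upperUnipotent (B : Matrix n n α) : Matrix (n ⊕ n) (n ⊕ n) α := fromBlocks 1 B 0 1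

lemma upperUnipotent_zero : upperUnipotent (0 : Matrix n n α) = 1 := fromBlocks_one

variable [Fintype n]

lemma upperUnipotent_mul_upperUnipotent (B C : Matrix n n α) :
    upperUnipotent B * upperUnipotent C = upperUnipotent (B + C) := by
  simp [upperUnipotent, fromBlocks_multiply, add_comm]

lemma inv_upperUnipotent (B : Matrix n n α) : (upperUnipotent B)⁻¹ = upperUnipotent (-B) :=
  inv_eq_right_inv (by rw [upperUnipotent_mul_upperUnipotent, add_neg_cancel, upperUnipotent_zero])

lemma fromBlocks_mul_upperUnipotent {A B D : Matrix n n α} (hAD : Aᵀ * D = 1) (C : Matrix n n α) :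
    fromBlocks A B 0 D * upperUnipotent C = upperUnipotent (A * C * Aᵀ) * fromBlocks A B 0 D := by
  simp [upperUnipotent, fromBlocks_multiply, Matrix.mul_assoc, hAD, add_comm]

lemma conj_upperUnipotent {u : Matrix (n ⊕ n) (n ⊕ n) α} {A B D : Matrix n n α}
    (hu : IsUnit u.det) (huAD : u = fromBlocks A B 0 D) (hAD : Aᵀ * D = 1) (C : Matrix n n α) :
    u * upperUnipotent C * u⁻¹ = upperUnipotent (A * C * Aᵀ) := by
  subst huAD
  rw [fromBlocks_mul_upperUnipotent hAD, mul_nonsing_inv_cancel_right _ _ hu]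

end UpperUnipotent

lemma Matrix.IsSymm.mul_mul_transpose {n α : Type*} [Fintype n] [CommSemiring α]
    {B : Matrix n n α} (hB : B.IsSymm) (A : Matrix n n α) : (A * B * Aᵀ).IsSymm := by
  simp [IsSymm, transpose_mul, hB.eq, Matrix.mul_assoc]

section Symplectic

variable {g : ℕ}

lemma fromBlocks_transpose_mul_Jmat_mul (A B D : Matrix (Fin g) (Fin g) ℤ) :
    (fromBlocks A B 0 D)ᵀ * Jmat g * fromBlocks A B 0 D
      = fromBlocks 0 (Aᵀ * D) (-(Dᵀ * A)) (Bᵀ * D - Dᵀ * B) := by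
  simp [Jmat, fromBlocks_transpose, fromBlocks_multiply, neg_add_eq_sub]

lemma exists_fromBlocks_of_mem_urSpSet {u : Matrix (Fin g ⊕ Fin g) (Fin g ⊕ Fin g) ℤ}
    (hu : u ∈ urSpSet g) : ∃ A B D, u = fromBlocks A B 0 D ∧ Aᵀ * D = 1 := by
  obtain ⟨⟨-, hJ⟩, h₂₁⟩ := hu
  refine ⟨u.toBlocks₁₁, u.toBlocks₁₂, u.toBlocks₂₂, by rw [← h₂₁, fromBlocks_toBlocks], ?_⟩
  rw [← fromBlocks_toBlocks u, h₂₁, fromBlocks_transpose_mul_Jmat_mul] at hJ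
  simpa [Jmat] using congrArg toBlocks₁₂ hJ

lemma fromBlocks_inv_transpose_mem_urSpSet {A : Matrix (Fin g) (Fin g) ℤ} (hA : IsUnit A.det) :
    fromBlocks A 0 0 (A⁻¹)ᵀ ∈ urSpSet g := by
  refine ⟨⟨?_, ?_⟩, toBlocks_fromBlocks₂₁ _ _ _ _⟩
  · simpa [det_fromBlocks_zero₂₁] using hA.mul (isUnit_nonsing_inv_det A hA)
  · rw [fromBlocks_transpose_mul_Jmat_mul]
    simp [← transpose_mul, nonsing_inv_mul A hA, Jmat]

lemma conj_upperUnipotent_of_mem_urSpSet {u : Matrix (Fin g ⊕ Fin g) (Fin g ⊕ Fin g) ℤ}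
    (hu : u ∈ urSpSet g) {B : Matrix (Fin g) (Fin g) ℤ} (hB : B.IsSymm) :
    u * upperUnipotent B * u⁻¹ ∈ SgSet g := by
  obtain ⟨A, _, _, huAD, hAD⟩ := exists_fromBlocks_of_mem_urSpSet hu
  exact ⟨_, hB.mul_mul_transpose A, conj_upperUnipotent hu.1.1 huAD hAD B⟩

end Symplectic

section Columns

variable {n R : Type*} [Fintype n] [DecidableEq n] [CommRing R]

lemma permMatrix_swap_mulVec_single (z i : n) :
    (Equiv.swap z i).permMatrix R *ᵥ Pi.single z 1 = Pi.single i 1 := by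
  ext k
  simp [Pi.single_apply, Equiv.swap_apply_eq_iff]

lemma transvection_mulVec_single (i j : n) :
    transvection j i (1 : R) *ᵥ Pi.single i 1 = Pi.single i 1 + Pi.single j 1 := by
  rw [transvection, add_mulVec, one_mulVec, single_mulVec_eq]
  simp

end Columns

section SymmetricBasis

variable {g : ℕ}

lemma smat_self (i : Fin g) : Smat g i i = vecMulVec (Pi.single i 1) (Pi.single i 1) := by
  rw [← single_eq_single_vecMulVec_single]
  ext k l
  simp [Smat, single_apply, eq_comm]

lemma smat_of_ne {i j : Fin g} (hij : i ≠ j) :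
    Smat g i j =
      vecMulVec (Pi.single i 1) (Pi.single j 1) + vecMulVec (Pi.single j 1) (Pi.single i 1) := by
  rw [← single_eq_single_vecMulVec_single, ← single_eq_single_vecMulVec_single]
  ext k l
  simp only [Smat, of_apply, Matrix.add_apply, single_apply]
  grind

lemma smat_isSymm (i j : Fin g) : (Smat g i j).IsSymm :=
  IsSymm.ext fun k l => by simp only [Smat, of_apply, and_comm, or_comm]

lemma Matrix.IsSymm.eq_sum_smat {B : Matrix (Fin g) (Fin g) ℤ} (hB : B.IsSymm) :
    B = ∑ i, ∑ j, (if j ≤ i then B i j else 0) • Smat g i j := by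
  ext k l
  simp only [Matrix.sum_apply, Matrix.smul_apply, Smat, of_apply, smul_eq_mul, mul_ite, mul_one,
    mul_zero]
  have hsupport (i j : Fin g) :
      ((k = i ∧ l = j) ∨ (k = j ∧ l = i)) ↔ (i, j) ∈ ({(k, l), (l, k)} : Finset _) := by
    simp [eq_comm, and_comm]
  simp_rw [hsupport, ← Fintype.sum_prod_type', Finset.sum_ite_mem, Finset.univ_inter]
  rcases lt_trichotomy k l with h | rfl | h
  · rw [Finset.sum_pair (by simp [h.ne])]
    simp [h.not_ge, h.le, hB.apply]
  · simp
  · rw [Finset.sum_pair (by simp [h.ne'])]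
    simp [h.not_ge, h.le]

lemma Matrix.IsSymm.mem_of_forall_smat_mem {H : AddSubgroup (Matrix (Fin g) (Fin g) ℤ)}
    (hS : ∀ i j, Smat g i j ∈ H) {B : Matrix (Fin g) (Fin g) ℤ} (hB : B.IsSymm) : B ∈ H := by
  rw [hB.eq_sum_smat]
  exact H.sum_mem fun i _ => H.sum_mem fun j _ => H.zsmul_mem (hS i j) _

lemma mul_smat_self_mul_transpose (A : Matrix (Fin g) (Fin g) ℤ) (z : Fin g) :
    A * Smat g z z * Aᵀ = vecMulVec (A *ᵥ Pi.single z 1) (A *ᵥ Pi.single z 1) := by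
  rw [smat_self, mul_vecMulVec, vecMulVec_mul, vecMul_transpose]

lemma vecMulVec_single_add_single {i j : Fin g} (hij : i ≠ j) :
    vecMulVec (Pi.single i 1 + Pi.single j 1) (Pi.single i 1 + Pi.single j 1)
      = Smat g i i + Smat g j j + Smat g i j := by
  rw [smat_self, smat_self, smat_of_ne hij, add_vecMulVec, vecMulVec_add, vecMulVec_add]
  abel

lemma smat_mem_of_forall_mul_smat_mul_transpose_mem {H : AddSubgroup (Matrix (Fin g) (Fin g) ℤ)}
    {z : Fin g} (hH : ∀ A : Matrix (Fin g) (Fin g) ℤ, IsUnit A.det → A * Smat g z z * Aᵀ ∈ H)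
    (i j : Fin g) : Smat g i j ∈ H := by
  have hP (i : Fin g) : IsUnit ((Equiv.swap z i).permMatrix ℤ).det := by
    simp [det_permutation]
  have hdiag (i : Fin g) : Smat g i i ∈ H := by
    have := hH _ (hP i)
    rwa [mul_smat_self_mul_transpose, permMatrix_swap_mulVec_single, ← smat_self] at this
  rcases eq_or_ne i j with rfl | hij
  · exact hdiag i
  have hE : IsUnit (transvection j i (1 : ℤ) * (Equiv.swap z i).permMatrix ℤ).det := by
    simp [det_permutation, det_transvection_of_ne _ _ hij.symm]
  have hsum := hH _ hE
  rw [mul_smat_self_mul_transpose, ← mulVec_mulVec, permMatrix_swap_mulVec_single,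
    transvection_mulVec_single, vecMulVec_single_add_single hij] at hsum
  convert H.sub_mem (H.sub_mem hsum (hdiag i)) (hdiag j) using 1
  abel

end SymmetricBasis

def Submonoid.upperUnipotentPreimage {n α : Type*} [Fintype n] [DecidableEq n] [CommRing α]
    (M : Submonoid (Matrix (n ⊕ n) (n ⊕ n) α)) : AddSubgroup (Matrix n n α) where
  -- `M` need not be closed under inverses, so `-C` is required explicitly.
  carrier := {C | upperUnipotent C ∈ M ∧ upperUnipotent (-C) ∈ M}
  zero_mem' := by simp [upperUnipotent_zero, M.one_mem]
  add_mem' {B C} hB hC := by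
    simp only [Set.mem_ofPred_eq, neg_add, ← upperUnipotent_mul_upperUnipotent]
    exact ⟨M.mul_mem hB.1 hC.1, M.mul_mem hB.2 hC.2⟩
  neg_mem' {C} hC := ⟨hC.2, by rw [neg_neg]; exact hC.1⟩

section NormalClosure

variable {n : Type*} [Fintype n] [DecidableEq n]

lemma conj_mem_ncl {U S : Set (Matrix n n ℤ)} {u y : Matrix n n ℤ} (hu : u ∈ U) (hy : y ∈ S) :
    u * y * u⁻¹ ∈ ncl U S :=
  Submonoid.subset_closure ⟨u, hu, y, hy, Or.inl rfl⟩

lemma conj_inv_mem_ncl {U S : Set (Matrix n n ℤ)} {u y : Matrix n n ℤ} (hu : u ∈ U) (hy : y ∈ S) :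
    u * y⁻¹ * u⁻¹ ∈ ncl U S :=
  Submonoid.subset_closure ⟨u, hu, y, hy, Or.inr rfl⟩

end NormalClosure

section NormalClosureUrSp

variable {g : ℕ}

def sgSubmonoid (g : ℕ) : Submonoid (Matrix (Fin g ⊕ Fin g) (Fin g ⊕ Fin g) ℤ) where
  carrier := SgSet g
  one_mem' := ⟨0, isSymm_zero, fromBlocks_one.symm⟩
  mul_mem' := by
    rintro _ _ ⟨B, hB, rfl⟩ ⟨C, hC, rfl⟩
    exact ⟨B + C, hB.add hC, upperUnipotent_mul_upperUnipotent B C⟩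

lemma ncl_urSpSet_subset_sgSet {S : Set (Matrix (Fin g ⊕ Fin g) (Fin g ⊕ Fin g) ℤ)}
    (hS : S ⊆ SgSet g) : ncl (urSpSet g) S ⊆ SgSet g := by
  refine Submonoid.closure_le (S := sgSubmonoid g).mpr ?_
  rintro _ ⟨u, hu, _, hy, rfl | rfl⟩ <;> obtain ⟨B, hB, rfl⟩ := hS hy
  · exact conj_upperUnipotent_of_mem_urSpSet hu hB
  · rw [show fromBlocks 1 B 0 1 = upperUnipotent B from rfl, inv_upperUnipotent]
    exact conj_upperUnipotent_of_mem_urSpSet hu hB.neg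

lemma upperUnipotent_conj_mem_ncl_urSpSet (z : Fin g) {A : Matrix (Fin g) (Fin g) ℤ}
    (hA : IsUnit A.det) :
    upperUnipotent (A * Smat g z z * Aᵀ) ∈ ncl (urSpSet g) {Ymat g z z} ∧
      upperUnipotent (-(A * Smat g z z * Aᵀ)) ∈ ncl (urSpSet g) {Ymat g z z} := by
  have hu := fromBlocks_inv_transpose_mem_urSpSet hA
  have hAD : Aᵀ * (A⁻¹)ᵀ = 1 := by rw [← transpose_mul, nonsing_inv_mul A hA, transpose_one]
  have hconj := conj_upperUnipotent hu.1.1 rfl hAD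
  rw [← Matrix.neg_mul, ← Matrix.mul_neg, ← hconj, ← hconj, ← inv_upperUnipotent]
  exact ⟨conj_mem_ncl hu rfl, conj_inv_mem_ncl hu rfl⟩

lemma sgSet_subset_ncl_urSpSet (z : Fin g) : SgSet g ⊆ ncl (urSpSet g) {Ymat g z z} := by
  rintro _ ⟨B, hB, rfl⟩
  have hH (A : Matrix (Fin g) (Fin g) ℤ) (hA : IsUnit A.det) :
      A * Smat g z z * Aᵀ ∈ (Submonoid.closure _).upperUnipotentPreimage :=
    upperUnipotent_conj_mem_ncl_urSpSet z hA
  exact (hB.mem_of_forall_smat_mem (smat_mem_of_forall_mul_smat_mul_transpose_mem hH)).1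

end NormalClosureUrSp

/-- For `g ≥ 1`, `S_g` is the normal closure of `Y_{1,1}` in `urSp(2g)`. -/
theorem stmt4 (g : ℕ) (hg : 1 ≤ g) :
    SgSet g = ncl (urSpSet g) {Ymat g ⟨0, by omega⟩ ⟨0, by omega⟩} :=
  (sgSet_subset_ncl_urSpSet _).antisymm
    (ncl_urSpSet_subset_sgSet (Set.singleton_subset_iff.mpr ⟨_, smat_isSymm _ _, rfl⟩))
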